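/- Let R be a Noetherian ring, X flat of finite type over Spec R with geometrically reduced fibers; then X is reduced provided Spec R is reduced. -/

import Mathlib

open AlgebraicGeometry CategoryTheory CategoryTheory.Limits

open TensorProduct

section AuxLemmas

theorem aux_isReduced_of_isLocalizedModule {A C D : Type*} [CommRing A] [CommRing C]
    [CommRing D] [Algebra A C] [Algebra A D] (S : Submonoid A) (g : C →ₐ[A] D)
    [IsLocalizedModule S g.toLinearMap] [IsReduced C] : IsReduced D := by
  have hu : ∀ (u : S) (x : D), (u : A) • x = 0 → x = 0 := by
    intro u x hx
    have h1 := IsLocalizedModule.map_units (S := S) g.toLinearMap u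
    have h2 := ((Module.End.isUnit_iff _).mp h1).injective
    apply h2
    simpa [Module.algebraMap_end_apply] using hx
  constructor
  intro d hd
  obtain ⟨n, hn⟩ := hd
  obtain ⟨⟨c, s⟩, hcs⟩ := IsLocalizedModule.surj S g.toLinearMap d
  rcases n with _ | n
  · have h1 : (1 : D) = 0 := by simpa using hn
    calc d = d * 1 := by ring
    _ = 0 := by rw [h1, mul_zero]
  · have h1 : g c ^ (n + 1) = 0 := by
      have : g c = (s : A) • d := by simpa [Submonoid.smul_def] using hcs.symm
      rw [this, Algebra.smul_def, mul_pow, hn, mul_zero]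
    have h2 : g.toLinearMap (c ^ (n + 1)) = g.toLinearMap (0 : C) := by
      simpa [map_pow] using h1
    obtain ⟨t, ht⟩ := IsLocalizedModule.exists_of_eq (S := S) (f := g.toLinearMap) h2
    rw [smul_zero] at ht
    have ht' : algebraMap A C t * c ^ (n + 1) = 0 := by
      rw [← Algebra.smul_def]; exact ht
    have h3 : (algebraMap A C t * c) ^ (n + 1) = 0 := by
      rw [mul_pow, pow_succ (algebraMap A C t) n, mul_assoc, mul_comm ((algebraMap A C t)) (c ^ (n+1)), ← mul_assoc, mul_comm _ (algebraMap A C t), ← mul_assoc]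
      rw [mul_comm (algebraMap A C t) ((algebraMap A C t) ^ n), mul_assoc, ht', mul_zero]
    have h4 : algebraMap A C t * c = 0 := IsNilpotent.eq_zero ⟨n + 1, h3⟩
    have h5 : (t : A) • c = 0 := by rw [Algebra.smul_def, h4]
    have h6 : (t : A) • g c = 0 := by
      have := g.toLinearMap.map_smul (t : A) c
      rw [h5, map_zero] at this
      exact this.symm
    have hgc : g c = 0 := hu t _ h6
    refine hu s d ?_
    have : (s : A) • d = g c := by simpa [Submonoid.smul_def] using hcs
    rw [this, hgc]

theorem aux_isLocalizedModule_tensor (R A B K : Type*) [CommRing R] [CommRing A]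
    [CommRing B] [CommRing K] [Algebra R A] [Algebra R B] [Algebra A B] [IsScalarTower R A B]
    [Algebra R K] (S : Submonoid A) [IsLocalization S B] :
    IsLocalizedModule S ((Algebra.TensorProduct.map (Algebra.ofId A B)
      (AlgHom.id R K)).toLinearMap) := by
  haveI : SMulCommClass R A B := ⟨fun r a b => by
    simp only [Algebra.smul_def]; ring⟩
  haveI : IsScalarTower A B (B ⊗[R] K) := IsScalarTower.of_algebraMap_eq fun a => by
    simp [Algebra.TensorProduct.algebraMap_apply]
  rw [isLocalizedModule_iff_isBaseChange S B]
  have h1 : IsBaseChange B (TensorProduct.mk A B (A ⊗[R] K) 1) :=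
    TensorProduct.isBaseChange A (A ⊗[R] K) B
  let e : B ⊗[A] (A ⊗[R] K) ≃ₗ[B] B ⊗[R] K :=
    TensorProduct.AlgebraTensorModule.cancelBaseChange R A B B K
  have h2 := h1.comp (IsBaseChange.ofEquiv e)
  have key : (e.toLinearMap.restrictScalars A).comp (TensorProduct.mk A B (A ⊗[R] K) 1)
      = (Algebra.TensorProduct.map (Algebra.ofId A B) (AlgHom.id R K)).toLinearMap := by
    apply LinearMap.restrictScalars_injective R
    apply TensorProduct.ext'
    intro a k
    show e (1 ⊗ₜ[A] (a ⊗ₜ[R] k)) = _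
    rw [TensorProduct.AlgebraTensorModule.cancelBaseChange_tmul]
    simp [Algebra.ofId_apply, Algebra.algebraMap_eq_smul_one]
  rwa [key] at h2

theorem aux_reduced_of_flat (R B : Type) [CommRing R] [CommRing B] [Algebra R B]
    [IsNoetherianRing R] [IsReduced R] [Module.Flat R B]
    (h : ∀ (K : Type) [Field K] [Algebra R K], IsReduced (B ⊗[R] K)) : IsReduced B := by
  classical
  constructor
  intro b hb
  have hfin : (minimalPrimes R).Finite := minimalPrimes.finite_of_isNoetherianRing R
  set ι := hfin.toFinset with hι
  have hP : ∀ i : ι, ((i : Ideal R)).IsPrime := fun i => (hfin.mem_toFinset.mp i.2).1.1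
  haveI : ∀ i : ι, ((i : Ideal R)).IsPrime := hP
  let Kf : ι → Type := fun i => FractionRing (R ⧸ (i : Ideal R))
  letI algKf : ∀ i : ι, Algebra R (Kf i) := fun i =>
    ((algebraMap (R ⧸ (i : Ideal R)) (Kf i)).comp (Ideal.Quotient.mk _)).toAlgebra
  letI : ∀ i : ι, CommRing (Kf i) := fun i => inferInstance
  letI : ∀ i : ι, AddCommGroup (Kf i) := fun i => inferInstance
  letI : ∀ i : ι, Module R (Kf i) := fun i => Algebra.toModule
  let ψ : R →ₗ[R] (∀ i : ι, Kf i) := LinearMap.pi fun i => Algebra.linearMap R (Kf i)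
  have hψ : Function.Injective ψ := by
    intro r r' hr
    rw [← sub_eq_zero]
    set q := r - r' with hq
    have hr0 : ψ q = 0 := by rw [map_sub, hr, sub_self]
    have hr' : ∀ i : ι, algebraMap R (Kf i) q = 0 := fun i => congrFun hr0 i
    have hmem : ∀ p ∈ minimalPrimes R, q ∈ p := by
      intro p hp
      haveI : p.IsPrime := hp.1.1
      have h0 := hr' ⟨p, hfin.mem_toFinset.mpr hp⟩
      have h1 : (algebraMap (R ⧸ p) (FractionRing (R ⧸ p))) ((Ideal.Quotient.mk p) q) = 0 := h0
      have h2 : (Ideal.Quotient.mk p) q = 0 := by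
        apply IsFractionRing.injective (R ⧸ p) (FractionRing (R ⧸ p))
        rw [h1, map_zero]
      exact (Ideal.Quotient.eq_zero_iff_mem).mp h2
    have hnil : q ∈ nilradical R := by
      rw [nilradical_eq_sInf, Ideal.mem_sInf]
      intro J hJ
      haveI : J.IsPrime := hJ
      obtain ⟨p, hp, hple⟩ := Ideal.exists_minimalPrimes_le (I := (⊥ : Ideal R)) (J := J) bot_le
      exact hple (hmem p hp)
    exact (IsNilpotent.eq_zero (by simpa [mem_nilradical] using hnil))
  have hzero : ∀ i : ι, (b ⊗ₜ[R] (1 : Kf i)) = 0 := by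
    intro i
    haveI : IsReduced (B ⊗[R] Kf i) := h (Kf i)
    have hnil : IsNilpotent (b ⊗ₜ[R] (1 : Kf i)) := by
      obtain ⟨n, hn⟩ := hb
      exact ⟨n, by rw [Algebra.TensorProduct.tmul_pow, hn, TensorProduct.zero_tmul]⟩
    exact hnil.eq_zero
  have e1 : (LinearMap.lTensor B ψ) (b ⊗ₜ[R] (1 : R)) = b ⊗ₜ[R] (ψ 1) :=
    LinearMap.lTensor_tmul B ψ b 1
  have e2 : TensorProduct.piRight R R B Kf ((LinearMap.lTensor B ψ) (b ⊗ₜ[R] (1 : R))) = 0 := by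
    rw [e1]
    rw [show (ψ 1) = fun i => (1 : Kf i) from funext fun i => map_one (algebraMap R (Kf i))]
    rw [TensorProduct.piRight_apply, TensorProduct.piRightHom_tmul]
    funext i
    exact hzero i
  have e3 : (LinearMap.lTensor B ψ) (b ⊗ₜ[R] (1 : R)) = 0 := by
    apply (TensorProduct.piRight R R B Kf).injective
    rw [e2]
    exact ((TensorProduct.piRight R R B Kf).toLinearMap.map_zero).symm
  have e4 : b ⊗ₜ[R] (1 : R) = (0 : B ⊗[R] R) := by
    apply Module.Flat.lTensor_preserves_injective_linearMap (M := B) ψ hψ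
    rw [e3]
    exact ((LinearMap.lTensor B ψ).map_zero).symm
  have := congrArg (TensorProduct.rid R B) e4
  rwa [TensorProduct.rid_tmul, one_smul, map_zero] at this

theorem aux_ringHom_flat_of_bijective {A B : Type*} [CommRing A] [CommRing B] {f : A →+* B}
    (hf : Function.Bijective f) : f.Flat := by
  letI := f.toAlgebra
  have : Module.Flat A B :=
    Module.Flat.of_linearEquiv (LinearEquiv.ofBijective (Algebra.linearMap A B) hf).symm
  exact this

theorem aux_ringHom_flat_of_isLocalization {A B : Type*} [CommRing A] [CommRing B] [Algebra A B]
    (S : Submonoid A) [IsLocalization S B] : (algebraMap A B).Flat := by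
  have h : (algebraMap A B).toAlgebra = ‹Algebra A B› := Algebra.algebra_ext _ _ fun r => rfl
  rw [RingHom.flat_algebraMap_iff]
  exact IsLocalization.flat B S

theorem aux_gamma_tensor_reduced {R K : Type} [CommRing R] [CommRing K]
    (Y : Scheme.{0}) [IsAffine Y] (h : Y ⟶ Spec (CommRingCat.of R)) (ψ : R →+* K)
    (hred : IsReduced (pullback h (Spec.map (CommRingCat.ofHom ψ))))
    (algA : Algebra R Γ(Y, ⊤)) (algK : Algebra R K)
    (hA : algebraMap R Γ(Y, ⊤) = RingHom.comp h.appTop.hom (Scheme.ΓSpecIso (CommRingCat.of R)).inv.hom)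
    (hK : algebraMap R K = ψ) :
    IsReduced (TensorProduct R Γ(Y, ⊤) K) := by
  have hfact : h = Y.toSpecΓ ≫ Spec.map (CommRingCat.ofHom (algebraMap R Γ(Y, ⊤))) := by
    rw [hA]
    show h = Y.toSpecΓ ≫ Spec.map ((Scheme.ΓSpecIso (CommRingCat.of R)).inv ≫ h.appTop)
    rw [Spec.map_comp, ← Category.assoc, ← Scheme.toSpecΓ_naturality, Category.assoc,
      ← SpecMap_ΓSpecIso_hom, ← Spec.map_comp, Iso.inv_hom_id, Spec.map_id, Category.comp_id]
  have e₁ : Spec.map (CommRingCat.ofHom (algebraMap R Γ(Y, ⊤))) ≫ 𝟙 _ =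
      inv Y.toSpecΓ ≫ h := by
    rw [Category.comp_id, hfact, IsIso.inv_hom_id_assoc]
  have e₂ : Spec.map (CommRingCat.ofHom (algebraMap R K)) ≫ 𝟙 _ =
      𝟙 _ ≫ Spec.map (CommRingCat.ofHom ψ) := by
    rw [hK, Category.comp_id, Category.id_comp]
  let θ := pullback.map (Spec.map (CommRingCat.ofHom (algebraMap R Γ(Y, ⊤))))
    (Spec.map (CommRingCat.ofHom (algebraMap R K))) h (Spec.map (CommRingCat.ofHom ψ))
    (inv Y.toSpecΓ) (𝟙 _) (𝟙 _) e₁ e₂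
  haveI : IsOpenImmersion θ := by
    apply Scheme.pullback_map_isOpenImmersion
  haveI hredP : IsReduced (pullback (Spec.map (CommRingCat.ofHom (algebraMap R Γ(Y, ⊤))))
      (Spec.map (CommRingCat.ofHom (algebraMap R K)))) :=
    isReduced_of_isOpenImmersion θ
  haveI : IsReduced (Spec (CommRingCat.of (TensorProduct R Γ(Y, ⊤) K))) :=
    isReduced_of_isOpenImmersion (pullbackSpecIso R Γ(Y, ⊤) K).inv
  exact (affine_isReduced_iff _).mp this

end AuxLemmas

/-- A morphism of schemes is flat if all of its stalk maps are flat ring maps. -/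
def IsFlatMorphism {X Y : AlgebraicGeometry.Scheme} (f : X ⟶ Y) : Prop :=
  ∀ x : X, letI := (f.stalkMap x).hom.toAlgebra
    Module.Flat (Y.presheaf.stalk (f.base x)) (X.presheaf.stalk x)

/-- (EGA IV 15.3.1-type statement.) Let `R` be a reduced Noetherian ring and `X` flat
and of finite type over `Spec R` with geometrically reduced fibers (formulated
universally: the base change of `X` to the spectrum of any field over `Spec R` is
reduced).  Then `X` is reduced. -/
theorem reduced_of_flat_geometrically_reduced_fibers
    (R : Type) [CommRing R] [IsNoetherianRing R] [_root_.IsReduced R]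
    (X : Scheme) (f : X ⟶ Spec (CommRingCat.of R))
    (hflat : IsFlatMorphism f) [LocallyOfFiniteType f] [QuasiCompact f]
    (hfib : ∀ (K : Type) [Field K] (g : Spec (CommRingCat.of K) ⟶ Spec (CommRingCat.of R)),
      AlgebraicGeometry.IsReduced (pullback f g)) :
    AlgebraicGeometry.IsReduced X := by
  suffices hst : ∀ x : X, _root_.IsReduced (X.presheaf.stalk x) by
    haveI := hst
    exact isReduced_of_isReduced_stalk X
  intro x
  obtain ⟨U, hUaff, hxU⟩ : ∃ U : X.Opens, IsAffineOpen U ∧ x ∈ U := by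
    obtain ⟨V, hV, hxV, -⟩ := TopologicalSpace.Opens.isBasis_iff_nbhd.mp
      X.isBasis_affineOpens (show x ∈ (⊤ : X.Opens) from trivial)
    exact ⟨V, hV, hxV⟩
  haveI hYaff : IsAffine U.toScheme := hUaff
  let Y : Scheme := U.toScheme
  let y : Y := ⟨x, hxU⟩
  let h : Y ⟶ Spec (CommRingCat.of R) := Scheme.Opens.ι U ≫ f
  -- the section ring and the stalk
  letI : Algebra Γ(Y, ⊤) (Y.presheaf.stalk y) :=
    Y.presheaf.algebra_section_stalk (⟨y, trivial⟩ : (⊤ : Y.Opens))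
  let p := (isAffineOpen_top Y).primeIdealOf (⟨y, trivial⟩ : (⊤ : Y.Opens))
  haveI hloc : IsLocalization.AtPrime (Y.presheaf.stalk y) p.asIdeal :=
    (isAffineOpen_top Y).isLocalization_stalk (⟨y, trivial⟩ : (⊤ : Y.Opens))
  -- algebra structures over R
  let φ : R →+* Γ(Y, ⊤) := RingHom.comp h.appTop.hom (Scheme.ΓSpecIso (CommRingCat.of R)).inv.hom
  letI algRA : Algebra R Γ(Y, ⊤) := φ.toAlgebra
  letI algRB : Algebra R (Y.presheaf.stalk y) :=
    ((algebraMap Γ(Y, ⊤) (Y.presheaf.stalk y)).comp φ).toAlgebra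
  haveI : IsScalarTower R Γ(Y, ⊤) (Y.presheaf.stalk y) := IsScalarTower.of_algebraMap_eq' rfl
  haveI : SMulCommClass R Γ(Y, ⊤) (Y.presheaf.stalk y) := ⟨fun r a b => by
    simp only [Algebra.smul_def]; ring⟩
  -- flatness
  have hstalkfact : (algebraMap Γ(Y, ⊤) (Y.presheaf.stalk y)).comp φ
      = RingHom.comp (h.stalkMap y).hom
          (RingHom.comp ((Spec (CommRingCat.of R)).presheaf.germ ⊤ (h.base y) trivial).hom
            ((Scheme.ΓSpecIso (CommRingCat.of R)).inv.hom)) := by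
    show (((Scheme.ΓSpecIso (CommRingCat.of R)).inv ≫ h.appTop) ≫ Y.presheaf.germ ⊤ y trivial).hom
      = (((Scheme.ΓSpecIso (CommRingCat.of R)).inv ≫
          (Spec (CommRingCat.of R)).presheaf.germ ⊤ (h.base y) trivial) ≫ h.stalkMap y).hom
    rw [Category.assoc, Category.assoc]; erw [Scheme.Hom.germ_stalkMap]
    rfl
  haveI hflat1 : RingHom.Flat ((Scheme.ΓSpecIso (CommRingCat.of R)).inv.hom) :=
    aux_ringHom_flat_of_bijective
      ((Scheme.ΓSpecIso (CommRingCat.of R)).commRingCatIsoToRingEquiv.symm.bijective)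
  haveI hflat2 : RingHom.Flat ((Spec (CommRingCat.of R)).presheaf.germ ⊤ (h.base y) trivial).hom := by
    letI := (Spec (CommRingCat.of R)).presheaf.algebra_section_stalk
      (⟨h.base y, trivial⟩ : (⊤ : (Spec (CommRingCat.of R)).Opens))
    haveI := (isAffineOpen_top (Spec (CommRingCat.of R))).isLocalization_stalk
      (⟨h.base y, trivial⟩ : (⊤ : (Spec (CommRingCat.of R)).Opens))
    exact aux_ringHom_flat_of_isLocalization
      (((isAffineOpen_top (Spec (CommRingCat.of R))).primeIdealOf
        ⟨h.base y, trivial⟩).asIdeal.primeCompl)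
  haveI hflat3 : RingHom.Flat (f.stalkMap (U.ι.base y)).hom := by
    letI := (f.stalkMap (U.ι.base y)).hom.toAlgebra
    exact hflat (U.ι.base y)
  haveI hflat4 : RingHom.Flat (U.ι.stalkMap y).hom :=
    aux_ringHom_flat_of_bijective ((asIso (U.ι.stalkMap y)).commRingCatIsoToRingEquiv.bijective)
  have hcompstalk : (h.stalkMap y).hom = (U.ι.stalkMap y).hom.comp (f.stalkMap (U.ι.base y)).hom :=
    congrArg CommRingCat.Hom.hom (Scheme.Hom.stalkMap_comp U.ι f y)
  haveI hflat5 : RingHom.Flat (h.stalkMap y).hom := by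
    rw [hcompstalk]; exact RingHom.Flat.comp hflat3 hflat4
  have hflatRB : RingHom.Flat ((algebraMap Γ(Y, ⊤) (Y.presheaf.stalk y)).comp φ) := by
    rw [hstalkfact]; exact RingHom.Flat.comp (RingHom.Flat.comp hflat1 hflat2) hflat5
  haveI hmodflat : Module.Flat R (Y.presheaf.stalk y) := hflatRB
  -- fibers
  have hfib' : ∀ (K : Type) [Field K] [Algebra R K],
      IsReduced ((Y.presheaf.stalk y) ⊗[R] K) := by
    intro K _ _
    have hredP : IsReduced (pullback h (Spec.map (CommRingCat.ofHom (algebraMap R K)))) := by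
      haveI h1 : IsReduced (pullback f (Spec.map (CommRingCat.ofHom (algebraMap R K)))) :=
        hfib K (Spec.map (CommRingCat.ofHom (algebraMap R K)))
      let θ := pullback.map h (Spec.map (CommRingCat.ofHom (algebraMap R K))) f
        (Spec.map (CommRingCat.ofHom (algebraMap R K)))
        (Scheme.Opens.ι U) (𝟙 _) (𝟙 _) (by simp [h]) (by simp)
      haveI : IsOpenImmersion θ := by apply Scheme.pullback_map_isOpenImmersion
      exact isReduced_of_isOpenImmersion θ
    haveI hAred : IsReduced (TensorProduct R Γ(Y, ⊤) K) :=
      aux_gamma_tensor_reduced Y h (algebraMap R K) hredP _ _ rfl rfl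
    haveI := aux_isLocalizedModule_tensor R Γ(Y, ⊤) (Y.presheaf.stalk y) K p.asIdeal.primeCompl
    exact aux_isReduced_of_isLocalizedModule p.asIdeal.primeCompl
      (Algebra.TensorProduct.map (Algebra.ofId Γ(Y, ⊤) (Y.presheaf.stalk y)) (AlgHom.id R K))
  haveI hYred : _root_.IsReduced (Y.presheaf.stalk y) :=
    aux_reduced_of_flat R (Y.presheaf.stalk y) hfib'
  have hinj : Function.Injective (U.ι.stalkMap y) :=
    ((asIso (U.ι.stalkMap y)).commRingCatIsoToRingEquiv.bijective).injective
  have hred' : _root_.IsReduced (X.presheaf.stalk (U.ι.base y)) :=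
    isReduced_of_injective (U.ι.stalkMap y).hom hinj
  exact hred'
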